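/- The centralizer of the element c = [a₁,b₁]⋯[a_g,b_g] in the free group F_{2g} (g ≥ 1) is the cyclic subgroup generated by c. -/

import Mathlib

/-!
By Nielsen–Schreier the subgroup generated by `c` and an element `w` commuting with it is free
and abelian, hence cyclic, so `c = z ^ m` and `w ∈ ⟨z⟩` for some `z`. The reduced word of `c` is
cyclically reduced, so a power `z ^ n = c` with `n ≥ 1` has reduced word `Tⁿ` for the cyclic reduction `T` of
`z`; the letter `a₁` occurs exactly once in `c`, which forces `n = 1`. Hence `m = ±1` and
`w ∈ ⟨z⟩ = ⟨c⟩`.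
-/

/-- The generator `aᵢ` of the free group of rank `2g`. -/
def genA (g : ℕ) (i : Fin g) : FreeGroup (Fin g ⊕ Fin g) := FreeGroup.of (Sum.inl i)

/-- The generator `bᵢ` of the free group of rank `2g`. -/
def genB (g : ℕ) (i : Fin g) : FreeGroup (Fin g ⊕ Fin g) := FreeGroup.of (Sum.inr i)

open scoped commutatorElement

/-- The surface relator `c = [a₁,b₁]⋯[a_g,b_g]`. -/
def surfaceRel (g : ℕ) : FreeGroup (Fin g ⊕ Fin g) :=
  (List.ofFn fun i : Fin g => ⁅genA g i, genB g i⁆).prod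

namespace FreeGroup

variable {α : Type*}

theorem eq_of_commute_of {a b : α} (h : Commute (of a) (of b)) : a = b := by
  classical
  have hred (x y : α) : IsReduced [(x, true), (y, true)] := by simp [IsReduced]
  have := congrArg toWord h.eq
  rw [toWord_mul, toWord_mul, toWord_of, toWord_of, List.singleton_append, List.singleton_append,
    (hred a b).reduce_eq, (hred b a).reduce_eq] at this
  simpa using (List.cons_eq_cons.1 this).1

theorem isCyclic_of_subsingleton [Subsingleton α] : IsCyclic (FreeGroup α) := by
  obtain ⟨x, hx⟩ : ∃ x : FreeGroup α, Set.range of ⊆ {x} := by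
    rcases isEmpty_or_nonempty α with _ | ⟨⟨a⟩⟩
    · exact ⟨1, by simp⟩
    · exact ⟨of a, by rintro _ ⟨b, rfl⟩; rw [Subsingleton.elim b a]; rfl⟩
  refine isCyclic_iff_exists_zpowers_eq_top.2 ⟨x, eq_top_iff.2 ?_⟩
  rw [← closure_range_of, Subgroup.zpowers_eq_closure]
  exact Subgroup.closure_mono hx

def commutatorWord (a b : α) : List (α × Bool) := [(a, true), (b, true), (a, false), (b, false)]

theorem mk_commutatorWord (a b : α) : mk (commutatorWord a b) = ⁅of a, of b⁆ := by
  simp [commutatorWord, commutatorElement_def, of, mul_mk, inv_mk, invRev]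

theorem mk_flatten (L : List (List (α × Bool))) : mk L.flatten = (L.map mk).prod := by
  induction L with
  | nil => rfl
  | cons l L ih => rw [List.flatten_cons, ← mul_mk, ih, List.map_cons, List.prod_cons]

variable [DecidableEq α]

open reduceCyclically in
theorem toWord_pow_eq_flatten_replicate {x : FreeGroup α} {n : ℕ} (hn : n ≠ 0)
    (h : IsCyclicallyReduced (x ^ n).toWord) :
    (x ^ n).toWord = (List.replicate n (reduceCyclically x.toWord)).flatten := by
  have hword := reduce_flatten_replicate (isReduced_toWord (x := x)) n
  rw [← toWord_pow, if_neg hn] at hword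
  rcases hc : conjugator x.toWord with _ | ⟨u, U⟩
  · simpa [hc] using hword
  · -- a nonempty conjugator `u :: U` makes the first and the last letter mutually inverse
    rw [hc, invRev_cons] at hword
    have hlast : (u.1, !u.2) ∈ (x ^ n).toWord.getLast? := by
      rw [hword, List.getLast?_append_of_ne_nil _ (by simp [invRev])]
      simp [invRev]
    have hhead : u ∈ (x ^ n).toWord.head? := by simp [hword]
    simpa using h.2 _ hlast _ hhead rfl

theorem eq_one_of_pow_eq {x y : FreeGroup α} {n : ℕ} (h : x ^ n = y)
    (hy : IsCyclicallyReduced y.toWord) {p : α × Bool → Bool} (hp : y.toWord.countP p = 1) :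
    n = 1 := by
  subst h
  have hn : n ≠ 0 := by rintro rfl; simp at hp
  rw [toWord_pow_eq_flatten_replicate hn hy, List.countP_flatten, List.map_replicate,
    List.sum_replicate, smul_eq_mul] at hp
  exact Nat.eq_one_of_mul_eq_one_right hp

theorem natAbs_eq_one_of_zpow_eq {x y : FreeGroup α} {k : ℤ} (h : x ^ k = y)
    (hy : IsCyclicallyReduced y.toWord) {p : α × Bool → Bool} (hp : y.toWord.countP p = 1) :
    k.natAbs = 1 := by
  rcases Int.natAbs_eq k with hk | hk <;> rw [hk] at h
  · exact eq_one_of_pow_eq (by rwa [zpow_natCast] at h) hy hp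
  · exact eq_one_of_pow_eq (x := x⁻¹) (by rwa [zpow_neg, zpow_natCast, ← inv_pow] at h) hy hp

end FreeGroup

namespace IsFreeGroup

theorem isCyclic_of_isMulCommutative (G : Type*) [Group G] [IsFreeGroup G] [IsMulCommutative G] :
    IsCyclic G := by
  have : Subsingleton (Generators G) := ⟨fun a b => FreeGroup.eq_of_commute_of <| by
    simpa [of] using Commute.map (mul_comm' (of a) (of b)) (toFreeGroup G)⟩
  exact (toFreeGroup G).isCyclic.2 FreeGroup.isCyclic_of_subsingleton

theorem exists_mem_zpowers_of_commute {G : Type*} [Group G] [IsFreeGroup G] {x y : G}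
    (h : Commute x y) : ∃ z : G, x ∈ Subgroup.zpowers z ∧ y ∈ Subgroup.zpowers z := by
  set H := Subgroup.closure {x, y}
  have : IsMulCommutative H := Subgroup.isMulCommutative_closure <| by
    simp only [Set.mem_insert_iff, Set.mem_singleton_iff]
    rintro a (rfl | rfl) b (rfl | rfl)
    exacts [rfl, h.eq, h.symm.eq, rfl]
  obtain ⟨z, hz⟩ := (isCyclic_of_isMulCommutative H).exists_generator
  have hmem (a : G) (ha : a ∈ H) : a ∈ Subgroup.zpowers (z : G) := by
    obtain ⟨k, hk⟩ := Subgroup.mem_zpowers_iff.1 (hz ⟨a, ha⟩)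
    exact Subgroup.mem_zpowers_iff.2 ⟨k, congrArg Subtype.val hk⟩
  exact ⟨z, hmem x (Subgroup.subset_closure (by simp)), hmem y (Subgroup.subset_closure (by simp))⟩

end IsFreeGroup

open FreeGroup (commutatorWord)

def surfaceWord (g : ℕ) : List ((Fin g ⊕ Fin g) × Bool) :=
  (List.ofFn fun i : Fin g => commutatorWord (Sum.inl i) (Sum.inr i)).flatten

theorem mk_surfaceWord (g : ℕ) : FreeGroup.mk (surfaceWord g) = surfaceRel g := by
  simp [surfaceWord, surfaceRel, FreeGroup.mk_flatten, List.map_ofFn, Function.comp_def,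
    FreeGroup.mk_commutatorWord, genA, genB]

theorem isReduced_surfaceWord (g : ℕ) : FreeGroup.IsReduced (surfaceWord g) := by
  rw [FreeGroup.IsReduced, surfaceWord, List.isChain_flatten (by simp [commutatorWord])]
  constructor
  · simp [commutatorWord]
  · rw [List.isChain_iff_getElem]
    simp [commutatorWord]

theorem toWord_surfaceRel (g : ℕ) : (surfaceRel g).toWord = surfaceWord g := by
  rw [← mk_surfaceWord, FreeGroup.toWord_mk, (isReduced_surfaceWord g).reduce_eq]

theorem isCyclicallyReduced_surfaceWord (g : ℕ) :
    FreeGroup.IsCyclicallyReduced (surfaceWord g) := by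
  refine ⟨isReduced_surfaceWord g, ?_⟩
  rcases g with _ | g
  · simp [surfaceWord]
  · intro a ha b hb
    rw [surfaceWord, List.ofFn_succ', List.concat_eq_append, List.flatten_append,
      List.getLast?_append_of_ne_nil _ (by simp [commutatorWord])] at ha
    rw [surfaceWord, List.ofFn_succ, List.flatten_cons,
      List.head?_append_of_ne_nil _ (by simp [commutatorWord])] at hb
    obtain rfl : a = (Sum.inr (Fin.last g), false) := by simpa [commutatorWord] using ha.symm
    obtain rfl : b = (Sum.inl 0, true) := by simpa [commutatorWord] using hb.symm
    simp

theorem countP_surfaceWord {g : ℕ} (hg : 0 < g) :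
    (surfaceWord g).countP (fun x => x = (Sum.inl ⟨0, hg⟩, true)) = 1 := by
  simp [surfaceWord, List.countP_flatten, List.map_ofFn, List.sum_ofFn, commutatorWord,
    List.countP_cons]

/-- The centralizer of `c = [a₁,b₁]⋯[a_g,b_g]` in the free group `F_{2g}` (`g ≥ 1`)
is the cyclic subgroup generated by `c`. -/
theorem centralizer_surfaceRel (g : ℕ) (hg : 1 ≤ g) :
    Subgroup.centralizer {surfaceRel g} = Subgroup.zpowers (surfaceRel g) := by
  refine le_antisymm (fun w hw => ?_)
    (Subgroup.zpowers_le.2 (Subgroup.mem_centralizer_singleton_iff.2 rfl))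
  obtain ⟨z, hc, hwz⟩ := IsFreeGroup.exists_mem_zpowers_of_commute
    (Subgroup.mem_centralizer_singleton_iff.1 hw).symm
  obtain ⟨m, hm⟩ := Subgroup.mem_zpowers_iff.1 hc
  have hm1 : m.natAbs = 1 := FreeGroup.natAbs_eq_one_of_zpow_eq hm
    (toWord_surfaceRel g ▸ isCyclicallyReduced_surfaceWord g)
    (toWord_surfaceRel g ▸ countP_surfaceWord hg)
  have hzc : Subgroup.zpowers z = Subgroup.zpowers (surfaceRel g) := by
    rcases Int.natAbs_eq_iff.1 hm1 with rfl | rfl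
    · rw [← hm, Nat.cast_one, zpow_one]
    · rw [← hm, Nat.cast_one, zpow_neg_one, Subgroup.zpowers_inv]
  exact hzc ▸ hwz
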